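/- arXiv:1809.08760 — 2 statements merged into one kernel-verified Lean document; each statement's English description precedes it below -/
import Mathlib

section
/- Let u1, u2, v1, v2 ∈ ℝ^p (p ≥ 1) have unit Euclidean length and let σ_u ≥ 0. Then the function f(σ_v) := ‖σ_v·v1 v2ᵀ − σ_u·u1 u2ᵀ‖ (spectral norm) is non-decreasing in σ_v on the range σ_v ∈ [σ_u, ∞). In particular, for any M ≥ 0 with M ≤ σ_u and M ≤ σ_v, one has ‖M·v1 v2ᵀ − M·u1 u2ᵀ‖ ≤ ‖σ_v·v1 v2ᵀ − σ_u·u1 u2ᵀ‖. -/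
open MeasureTheory ProbabilityTheory Real Filter
open scoped BigOperators ENNReal NNReal Matrix

noncomputable section

namespace AutoCov

variable {Ω : Type*} [MeasurableSpace Ω]

/-- The sub-Gaussian (ψ₂) norm of a real random variable. -/
def psi2 (μ : Measure Ω) (X : Ω → ℝ) : ℝ :=
  sInf {k : ℝ | 0 < k ∧ ∫ ω, (Real.exp ((|X ω| / k) ^ 2) - 1) ∂μ ≤ 1}

/-- The L(q) norm of a real random variable. -/
def Lq (μ : Measure Ω) (q : ℝ) (X : Ω → ℝ) : ℝ :=
  (∫ ω, |X ω| ^ q ∂μ) ^ (1 / q)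

/-- Euclidean dot product on `Fin p → ℝ`. -/
def dotp {p : ℕ} (u v : Fin p → ℝ) : ℝ := ∑ i, u i * v i

/-- Euclidean norm on `Fin p → ℝ`. -/
def vnorm {p : ℕ} (v : Fin p → ℝ) : ℝ := Real.sqrt (∑ i, v i ^ 2)

/-- Spectral (ℓ₂ operator) norm of a rectangular real matrix. -/
def specNorm {m n : ℕ} (A : Matrix (Fin m) (Fin n) ℝ) : ℝ :=
  sSup {x : ℝ | ∃ u : Fin n → ℝ, vnorm u ≤ 1 ∧ x = vnorm (A.mulVec u)}

/-- Largest eigenvalue of a symmetric matrix (Rayleigh quotient formulation). -/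
def lamMax {n : ℕ} (A : Matrix (Fin n) (Fin n) ℝ) : ℝ :=
  sSup {x : ℝ | ∃ u : Fin n → ℝ, vnorm u = 1 ∧ x = dotp u (A.mulVec u)}

/-- Nuclear norm of a matrix, via duality with the spectral norm. -/
def nucNorm {m n : ℕ} (A : Matrix (Fin m) (Fin n) ℝ) : ℝ :=
  sSup {x : ℝ | ∃ B : Matrix (Fin m) (Fin n) ℝ, specNorm B ≤ 1 ∧ x = Matrix.trace (Aᵀ * B)}

/-- Entrywise expectation of a random matrix. -/
def matExp {m n : ℕ} (μ : Measure Ω) (A : Ω → Matrix (Fin m) (Fin n) ℝ) :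
    Matrix (Fin m) (Fin n) ℝ :=
  Matrix.of fun i j => ∫ ω, A ω i j ∂μ

/-- The lag-`m` sample autocovariance matrix built from observations `Y 1, …, Y n`. -/
def sampleAutocov {p : ℕ} (Y : ℤ → Ω → Fin p → ℝ) (n m : ℕ) (ω : Ω) :
    Matrix (Fin p) (Fin p) ℝ :=
  ((n : ℝ) - m)⁻¹ •
    ∑ i ∈ Finset.range (n - m), Matrix.vecMulVec (Y ((i : ℤ) + 1) ω) (Y ((i : ℤ) + 1 + m) ω)

/-- Assumption (A1): `κ1` is the (finite) supremum of ψ₂ norms of projections on the unit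
sphere and `κs` the supremum over sign vectors. -/
def A1 {p : ℕ} (μ : Measure Ω) (Y : ℤ → Ω → Fin p → ℝ) (κ1 κs : ℝ) : Prop :=
  IsLUB {x : ℝ | ∃ (t : ℤ) (u : Fin p → ℝ), vnorm u = 1 ∧
      x = psi2 μ (fun ω => dotp u (Y t ω))} κ1 ∧
  IsLUB {x : ℝ | ∃ (t : ℤ) (v : Fin p → ℝ), (∀ i, v i = 1 ∨ v i = -1) ∧
      x = psi2 μ (fun ω => dotp v (Y t ω))} κs

/-- σ-algebra generated by a family of random elements. -/
def seqSigma {ι E : Type*} [MeasurableSpace E] (f : ι → Ω → E) : MeasurableSpace Ω :=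
  MeasurableSpace.comap (fun ω i => f i ω) MeasurableSpace.pi

/-- Two families of random elements have the same (joint) distribution. -/
def identDistribFam {ι E : Type*} [MeasurableSpace E] (μ : Measure Ω) (f g : ι → Ω → E) : Prop :=
  Measure.map (fun ω i => f i ω) μ = Measure.map (fun ω i => g i ω) μ

/-- Assumption (A2): the coupling property with constants `κ1, γ1, γ2, ε`. -/
def A2 {p : ℕ} (μ : Measure Ω) (Y : ℤ → Ω → Fin p → ℝ) (κ1 γ1 γ2 ε : ℝ) : Prop :=
  ∀ j : ℤ, ∃ Yt : ℤ → Ω → Fin p → ℝ,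
    Indep (seqSigma fun t : {t : ℤ // t ≤ j} => Y t.1)
          (seqSigma fun t : {t : ℤ // j < t} => Yt t.1) μ ∧
    identDistribFam μ (fun t : {t : ℤ // j < t} => Yt t.1) (fun t : {t : ℤ // j < t} => Y t.1) ∧
    ∀ k : ℤ, j + 1 ≤ k →
      Lq μ (1 + ε) (fun ω => vnorm (fun i => Y k ω i - Yt k ω i)) ≤
        γ1 * κ1 * Real.exp (-γ2 * ((k : ℝ) - (j : ℝ) - 1))

/-- Assumption (A3): the coupling property in the direction of unit vectors, with
constants `κ1, γ3, γ4, ε`. -/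
def A3 {p : ℕ} (μ : Measure Ω) (Y : ℤ → Ω → Fin p → ℝ) (κ1 γ3 γ4 ε : ℝ) : Prop :=
  ∀ j : ℤ, ∃ Yt : ℤ → Ω → Fin p → ℝ,
    Indep (seqSigma fun t : {t : ℤ // t ≤ j} => Y t.1)
          (seqSigma fun t : {t : ℤ // j < t} => Yt t.1) μ ∧
    identDistribFam μ (fun t : {t : ℤ // j < t} => Yt t.1) (fun t : {t : ℤ // j < t} => Y t.1) ∧
    ∀ k : ℤ, j + 1 ≤ k → ∀ u : Fin p → ℝ, vnorm u = 1 →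
      Lq μ (1 + ε) (fun ω => dotp (fun i => Y k ω i - Yt k ω i) u) ≤
        γ3 * κ1 * Real.exp (-γ4 * ((k : ℝ) - (j : ℝ) - 1))

/-- Assumption (A4). -/
def A4 {p : ℕ} (μ : Measure Ω) (Y : ℤ → Ω → Fin p → ℝ) (c : ℝ) : Prop :=
  ∀ (t : ℤ) (u : Fin p → ℝ),
    (psi2 μ fun ω => dotp u (Y t ω)) ^ 2 ≤ c * ∫ ω, (dotp u (Y t ω)) ^ 2 ∂μ

/-- Mean-zero random sequence. -/
def meanZero {p : ℕ} (μ : Measure Ω) (Y : ℤ → Ω → Fin p → ℝ) : Prop :=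
  ∀ t i, ∫ ω, Y t ω i ∂μ = 0

/-- (Strict) stationarity of the sequence. -/
def stationary {p : ℕ} (μ : Measure Ω) (Y : ℤ → Ω → Fin p → ℝ) : Prop :=
  ∀ s : ℤ, identDistribFam μ (fun t : ℤ => Y (t + s)) (fun t : ℤ => Y t)

/-- Second-order stationarity: means and autocovariances are shift invariant. -/
def secondOrderStationary {p : ℕ} (μ : Measure Ω) (Y : ℤ → Ω → Fin p → ℝ) : Prop :=
  (∀ (t : ℤ) i, ∫ ω, Y t ω i ∂μ = ∫ ω, Y 0 ω i ∂μ) ∧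
  ∀ (t s m : ℤ), matExp μ (fun ω => Matrix.vecMulVec (Y t ω) (Y (t + m) ω)) =
    matExp μ (fun ω => Matrix.vecMulVec (Y s ω) (Y (s + m) ω))

/-- The sequence is a centered jointly Gaussian sequence: every finite linear combination
of coordinates is a centered Gaussian real random variable. -/
def gaussianSeq {p : ℕ} (μ : Measure Ω) (Y : ℤ → Ω → Fin p → ℝ) : Prop :=
  ∀ (s : Finset (ℤ × Fin p)) (a : ℤ × Fin p → ℝ), ∃ v : ℝ≥0,
    Measure.map (fun ω => ∑ tk ∈ s, a tk * Y tk.1 ω tk.2) μ = gaussianReal 0 v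

instance matrixMeasurableSpace {m n : ℕ} : MeasurableSpace (Matrix (Fin m) (Fin n) ℝ) :=
  MeasurableSpace.pi

/-- `g` is 1-Lipschitz on tuples for the ℓ¹-sum of the norm-like function `N`. -/
def LipSum {ι E : Type*} [Fintype ι] [Sub E] (N : E → ℝ) (g : (ι → E) → ℝ) : Prop :=
  ∀ x y : ι → E, |g x - g y| ≤ ∑ j, N (x j - y j)

/-- τ-measure of dependence between a σ-algebra `A` and a finite family `X` of random
elements, relative to the norm-like function `N`. -/
def tauFam {ι E : Type*} [Fintype ι] [MeasurableSpace E] [Sub E]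
    (μ : Measure Ω) (A : MeasurableSpace Ω) (N : E → ℝ) (X : ι → Ω → E) : ℝ :=
  ∫ ω, sSup {r : ℝ | ∃ g : (ι → E) → ℝ, LipSum N g ∧
      r = (μ[(fun ω' => g fun j => X j ω') | A]) ω - ∫ ω', g (fun j => X j ω') ∂μ} ∂μ

/-- τ-mixing coefficient of the sequence `X` at lag `k`. -/
def tauMix {E : Type*} [MeasurableSpace E] [Sub E]
    (μ : Measure Ω) (N : E → ℝ) (X : ℤ → Ω → E) (k : ℕ) : ℝ :=
  sSup {r : ℝ | ∃ ℓ : ℕ, 0 < ℓ ∧ ∃ (a : ℤ) (js : Fin ℓ → ℤ), StrictMono js ∧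
      (∀ i, a + (k : ℤ) ≤ js i) ∧
      r = (ℓ : ℝ)⁻¹ * tauFam μ (seqSigma fun t : {t : ℤ // t ≤ a} => X t.1) N fun i => X (js i)}

/-- Matrix exponential. -/
def mexp {n : ℕ} (A : Matrix (Fin n) (Fin n) ℝ) : Matrix (Fin n) (Fin n) ℝ :=
  ∑' k : ℕ, ((k.factorial : ℝ))⁻¹ • A ^ k

/-- Spectral radius of a real square matrix (over its complex eigenvalues). -/
def specRad {n : ℕ} (A : Matrix (Fin n) (Fin n) ℝ) : ℝ :=
  sSup {r : ℝ | ∃ z : ℂ, z ∈ spectrum ℂ (A.map (algebraMap ℝ ℂ)) ∧ r = ‖z‖}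

/-- Truncation of a matrix at spectral-norm level `M`. -/
def trunc {m n : ℕ} (M : ℝ) (A : Matrix (Fin m) (Fin n) ℝ) : Matrix (Fin m) (Fin n) ℝ :=
  (min M (specNorm A) / specNorm A) • A

/-- The auxiliary function h(x) = x⁻²(eˣ - x - 1). -/
def hfun (x : ℝ) : ℝ := (Real.exp x - x - 1) / x ^ 2

/-!
Write `A = v₁ v₂ᵀ` and `B = u₁ u₂ᵀ`. Everything rests on
`min a b * ‖A - B‖ ≤ ‖a • A - b • B‖` for `a, b ≥ 0`. For `b ≤ a`, let `R` be the reflection in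
`(v₂ - u₂)ᗮ`, which swaps `v₂` and `u₂`; expanding the squares shows, for every `x`,
`2 ‖(b • A - b • B) x‖² ≤ ‖(a • A - b • B) x‖² + ‖(a • A - b • B) (R x)‖²`,
using only `|⟪v₁, u₁⟫| ≤ ‖v₁‖ ‖u₁‖`. Since `t ↦ ‖t • A - σu • B‖` is convex and, by this
inequality, minimal on `[σu, ∞)` at `σu`, it is monotone there; the bound for `M ≤ min σu σv`
is the same inequality.
-/

open scoped RealInnerProductSpace
open InnerProductSpace Set Submodule

theorem _root_.ConvexOn.monotoneOn_of_isMinOn {f : ℝ → ℝ} {t₀ : ℝ}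
    (hf : ConvexOn ℝ (Ici t₀) f) (hmin : IsMinOn f (Ici t₀) t₀) : MonotoneOn f (Ici t₀) := by
  intro s hs t ht hst
  have hseg : s ∈ segment ℝ t₀ t := by
    rw [segment_eq_Icc (hs.trans hst)]
    exact ⟨hs, hst⟩
  calc f s ≤ max (f t₀) (f t) := hf.le_on_segment self_mem_Ici ht hseg
    _ = f t := max_eq_right (hmin ht)

theorem convexOn_norm_smul_sub {V : Type*} [NormedAddCommGroup V] [NormedSpace ℝ V] (X Y : V) :
    ConvexOn ℝ univ (fun t : ℝ => ‖t • X - Y‖) := by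
  have h : (fun t : ℝ => ‖t • X - Y‖) =
      norm ∘ ((LinearMap.toSpanSingleton ℝ V X).toAffineMap - AffineMap.const ℝ ℝ Y) := by
    ext; simp
  rw [h]
  exact convexOn_univ_norm.comp_affineMap _

theorem two_mul_le_add_of_abs_le {a b s α C D : ℝ} (hb : 0 ≤ b) (hba : b ≤ a) (hα : |α| ≤ s) :
    2 * (b ^ 2 * C ^ 2 * s - 2 * b ^ 2 * C * D * α + b ^ 2 * D ^ 2 * s) ≤
      (a ^ 2 * C ^ 2 * s - 2 * a * b * C * D * α + b ^ 2 * D ^ 2 * s) +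
      (a ^ 2 * D ^ 2 * s - 2 * a * b * D * C * α + b ^ 2 * C ^ 2 * s) := by
  have hs : 0 ≤ s := (abs_nonneg α).trans hα
  have hCDα : C * D * α ≤ |C * D| * s := by
    calc C * D * α ≤ |C * D * α| := le_abs_self _
      _ = |C * D| * |α| := abs_mul _ _
      _ ≤ |C * D| * s := mul_le_mul_of_nonneg_left hα (abs_nonneg _)
  have hAMGM : 2 * |C * D| ≤ C ^ 2 + D ^ 2 := by
    rw [abs_mul]
    nlinarith [sq_nonneg (|C| - |D|), sq_abs C, sq_abs D]
  -- the difference of the two sides is `(a - b) * ((a + b) * s * (C² + D²) - 4 * b * C * D * α)`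
  have hbracket : 4 * b * (C * D * α) ≤ (a + b) * s * (C ^ 2 + D ^ 2) :=
    calc 4 * b * (C * D * α) ≤ 4 * b * (|C * D| * s) :=
          mul_le_mul_of_nonneg_left hCDα (by positivity)
      _ = 2 * b * s * (2 * |C * D|) := by ring
      _ ≤ 2 * b * s * (C ^ 2 + D ^ 2) := mul_le_mul_of_nonneg_left hAMGM (by positivity)
      _ ≤ (a + b) * s * (C ^ 2 + D ^ 2) := by gcongr; linarith
  nlinarith [mul_le_mul_of_nonneg_left hbracket (sub_nonneg.2 hba)]

section RankOne

variable {E F : Type*} [NormedAddCommGroup E] [InnerProductSpace ℝ E]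
  [NormedAddCommGroup F] [InnerProductSpace ℝ F]

theorem inner_reflection_sub_left {v w : E} (h : ‖v‖ = ‖w‖) (x : E) :
    ⟪v, reflection (ℝ ∙ (v - w))ᗮ x⟫ = ⟪w, x⟫ := by
  rw [← LinearIsometryEquiv.inner_map_map (reflection (ℝ ∙ (v - w))ᗮ), reflection_sub h,
    reflection_reflection]

theorem inner_reflection_sub_right {v w : E} (h : ‖v‖ = ‖w‖) (x : E) :
    ⟪w, reflection (ℝ ∙ (v - w))ᗮ x⟫ = ⟪v, x⟫ := by
  have hw : reflection (ℝ ∙ (v - w))ᗮ w = v := by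
    simpa only [reflection_reflection] using
      (congrArg (reflection (ℝ ∙ (v - w))ᗮ) (reflection_sub h)).symm
  rw [← LinearIsometryEquiv.inner_map_map (reflection (ℝ ∙ (v - w))ᗮ), hw,
    reflection_reflection]

theorem norm_sq_smul_rankOne_sub_smul_rankOne_apply (a b : ℝ) (v₁ u₁ : F) (v₂ u₂ x : E) :
    ‖(a • rankOne ℝ v₁ v₂ - b • rankOne ℝ u₁ u₂) x‖ ^ 2 =
      a ^ 2 * ⟪v₂, x⟫ ^ 2 * ‖v₁‖ ^ 2 - 2 * a * b * ⟪v₂, x⟫ * ⟪u₂, x⟫ * ⟪v₁, u₁⟫ +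
        b ^ 2 * ⟪u₂, x⟫ ^ 2 * ‖u₁‖ ^ 2 := by
  simp only [sub_apply, smul_apply, rankOne_apply, smul_smul]
  rw [norm_sub_sq_real, norm_smul, norm_smul, real_inner_smul_left, real_inner_smul_right]
  simp only [Real.norm_eq_abs, mul_pow, sq_abs]
  ring

theorem norm_smul_rankOne_sub_le {v₁ u₁ : F} {v₂ u₂ : E} (h₁ : ‖u₁‖ = ‖v₁‖)
    (h₂ : ‖u₂‖ = ‖v₂‖) {a b : ℝ} (hb : 0 ≤ b) (hba : b ≤ a) :
    ‖b • rankOne ℝ v₁ v₂ - b • rankOne ℝ u₁ u₂‖ ≤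
      ‖a • rankOne ℝ v₁ v₂ - b • rankOne ℝ u₁ u₂‖ := by
  set T := a • rankOne ℝ v₁ v₂ - b • rankOne ℝ u₁ u₂
  refine ContinuousLinearMap.opNorm_le_bound _ (norm_nonneg _) fun x => ?_
  have hα : |⟪v₁, u₁⟫| ≤ ‖v₁‖ ^ 2 := by
    simpa [h₁, sq] using abs_real_inner_le_norm v₁ u₁
  have hsq : 2 * ‖(b • rankOne ℝ v₁ v₂ - b • rankOne ℝ u₁ u₂) x‖ ^ 2 ≤
      ‖T x‖ ^ 2 + ‖T (reflection (ℝ ∙ (v₂ - u₂))ᗮ x)‖ ^ 2 := by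
    simp only [T, norm_sq_smul_rankOne_sub_smul_rankOne_apply, inner_reflection_sub_left h₂.symm,
      inner_reflection_sub_right h₂.symm, h₁]
    linarith [two_mul_le_add_of_abs_le (C := ⟪v₂, x⟫) (D := ⟪u₂, x⟫) hb hba hα]
  have h₁x : ‖T x‖ ≤ ‖T‖ * ‖x‖ := T.le_opNorm x
  have h₂x : ‖T (reflection (ℝ ∙ (v₂ - u₂))ᗮ x)‖ ≤ ‖T‖ * ‖x‖ := by
    simpa using T.le_opNorm (reflection (ℝ ∙ (v₂ - u₂))ᗮ x)
  refine (pow_le_pow_iff_left₀ (norm_nonneg _) (by positivity) two_ne_zero).1 ?_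
  linarith [pow_le_pow_left₀ (norm_nonneg _) h₁x 2, pow_le_pow_left₀ (norm_nonneg _) h₂x 2]

theorem min_mul_norm_rankOne_sub_le {v₁ u₁ : F} {v₂ u₂ : E} (h₁ : ‖u₁‖ = ‖v₁‖)
    (h₂ : ‖u₂‖ = ‖v₂‖) {a b : ℝ} (ha : 0 ≤ a) (hb : 0 ≤ b) :
    min a b * ‖rankOne ℝ v₁ v₂ - rankOne ℝ u₁ u₂‖ ≤
      ‖a • rankOne ℝ v₁ v₂ - b • rankOne ℝ u₁ u₂‖ := by
  rcases le_total b a with hba | hab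
  · rw [min_eq_right hba, ← norm_smul_of_nonneg hb, smul_sub]
    exact norm_smul_rankOne_sub_le h₁ h₂ hb hba
  · rw [min_eq_left hab, ← norm_smul_of_nonneg ha, smul_sub,
      norm_sub_rev (a • rankOne ℝ v₁ v₂), norm_sub_rev (a • rankOne ℝ v₁ v₂) (b • rankOne ℝ u₁ u₂)]
    exact norm_smul_rankOne_sub_le h₁.symm h₂.symm ha hab

end RankOne

theorem vnorm_eq_norm {p : ℕ} (v : Fin p → ℝ) : vnorm v = ‖WithLp.toLp 2 v‖ := by
  simp [vnorm, EuclideanSpace.norm_eq]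

open scoped Matrix.Norms.L2Operator in
theorem specNorm_eq_l2_opNorm {m n : ℕ} (A : Matrix (Fin m) (Fin n) ℝ) : specNorm A = ‖A‖ := by
  rw [Matrix.l2_opNorm_def, ← ContinuousLinearMap.sSup_unitClosedBall_eq_norm, specNorm]
  congr 1
  ext r
  simp only [vnorm_eq_norm, mem_ofPred_eq, mem_image, Metric.mem_closedBall, dist_zero_right]
  constructor
  · rintro ⟨u, hu, rfl⟩
    exact ⟨WithLp.toLp 2 u, hu, rfl⟩
  · rintro ⟨x, hx, rfl⟩
    exact ⟨x.ofLp, hx, rfl⟩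

theorem toEuclideanLin_trans_toContinuousLinearMap_vecMulVec {m n : ℕ} (v : Fin m → ℝ)
    (w : Fin n → ℝ) :
    (Matrix.toEuclideanLin.trans LinearMap.toContinuousLinearMap) (Matrix.vecMulVec v w) =
      rankOne ℝ (WithLp.toLp 2 v) (WithLp.toLp 2 w) := by
  have h := symm_toEuclideanLin_rankOne (𝕜 := ℝ) (WithLp.toLp 2 v) (WithLp.toLp 2 w)
  rw [star_trivial] at h
  rw [← h, LinearEquiv.trans_apply, LinearEquiv.apply_symm_apply]
  rfl

theorem specNorm_smul_vecMulVec_sub_smul_vecMulVec {m n : ℕ} (a b : ℝ) (v₁ u₁ : Fin m → ℝ)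
    (v₂ u₂ : Fin n → ℝ) :
    specNorm (a • Matrix.vecMulVec v₁ v₂ - b • Matrix.vecMulVec u₁ u₂) =
      ‖a • rankOne ℝ (WithLp.toLp 2 v₁) (WithLp.toLp 2 v₂) -
        b • rankOne ℝ (WithLp.toLp 2 u₁) (WithLp.toLp 2 u₂)‖ := by
  rw [specNorm_eq_l2_opNorm, Matrix.l2_opNorm_def, map_sub, map_smul, map_smul,
    toEuclideanLin_trans_toContinuousLinearMap_vecMulVec,
    toEuclideanLin_trans_toContinuousLinearMap_vecMulVec]

theorem rank_one_distance_monotone_general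
    {p : ℕ}
    (u1 u2 v1 v2 : Fin p → ℝ)
    (hu1 : vnorm u1 = 1) (hu2 : vnorm u2 = 1) (hv1 : vnorm v1 = 1) (hv2 : vnorm v2 = 1)
    (σu : ℝ) (hσu : 0 ≤ σu) :
    MonotoneOn (fun σv : ℝ =>
        specNorm (σv • Matrix.vecMulVec v1 v2 - σu • Matrix.vecMulVec u1 u2))
      (Set.Ici σu) ∧
    ∀ M σv : ℝ, 0 ≤ M → M ≤ σu → M ≤ σv →
      specNorm (M • Matrix.vecMulVec v1 v2 - M • Matrix.vecMulVec u1 u2) ≤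
        specNorm (σv • Matrix.vecMulVec v1 v2 - σu • Matrix.vecMulVec u1 u2) := by
  set A := rankOne ℝ (WithLp.toLp 2 v1) (WithLp.toLp 2 v2)
  set B := rankOne ℝ (WithLp.toLp 2 u1) (WithLp.toLp 2 u2)
  have h₁ : ‖WithLp.toLp 2 u1‖ = ‖WithLp.toLp 2 v1‖ := by
    rw [← vnorm_eq_norm, ← vnorm_eq_norm, hu1, hv1]
  have h₂ : ‖WithLp.toLp 2 u2‖ = ‖WithLp.toLp 2 v2‖ := by
    rw [← vnorm_eq_norm, ← vnorm_eq_norm, hu2, hv2]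
  have hscale : ∀ c, 0 ≤ c → ‖c • A - c • B‖ = c * ‖A - B‖ := fun c hc => by
    rw [← smul_sub, norm_smul_of_nonneg hc]
  simp only [specNorm_smul_vecMulVec_sub_smul_vecMulVec]
  refine ⟨?_, fun M σv hM hMu hMv => ?_⟩
  · refine ((convexOn_norm_smul_sub A (σu • B)).subset (subset_univ _) (convex_Ici σu))
      |>.monotoneOn_of_isMinOn fun t ht => ?_
    calc ‖σu • A - σu • B‖ = min t σu * ‖A - B‖ := by rw [hscale σu hσu, min_eq_right ht]
      _ ≤ ‖t • A - σu • B‖ := min_mul_norm_rankOne_sub_le h₁ h₂ (hσu.trans ht) hσu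
  · calc ‖M • A - M • B‖ = M * ‖A - B‖ := hscale M hM
      _ ≤ min σv σu * ‖A - B‖ := by gcongr; exact le_min hMv hMu
      _ ≤ ‖σv • A - σu • B‖ := min_mul_norm_rankOne_sub_le h₁ h₂ (hM.trans hMv) hσu

/-- Lemma 4.7 of Han–Li: monotonicity of the spectral-norm distance
between scaled rank-one matrices. -/
theorem rank_one_distance_monotone
    {p : ℕ} (hp : 0 < p)
    (u1 u2 v1 v2 : Fin p → ℝ)
    (hu1 : vnorm u1 = 1) (hu2 : vnorm u2 = 1) (hv1 : vnorm v1 = 1) (hv2 : vnorm v2 = 1)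
    (σu : ℝ) (hσu : 0 ≤ σu) :
    MonotoneOn (fun σv : ℝ =>
        specNorm (σv • Matrix.vecMulVec v1 v2 - σu • Matrix.vecMulVec u1 u2))
      (Set.Ici σu) ∧
    ∀ M σv : ℝ, 0 ≤ M → M ≤ σu → M ≤ σv →
      specNorm (M • Matrix.vecMulVec v1 v2 - M • Matrix.vecMulVec u1 u2) ≤
        specNorm (σv • Matrix.vecMulVec v1 v2 - σu • Matrix.vecMulVec u1 u2) :=
  rank_one_distance_monotone_general u1 u2 v1 v2 hu1 hu2 hv1 hv2 σu hσu

end AutoCov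

end
end

section
/- Let {Y_t}_{t∈ℤ} be a stationary sequence of mean-zero jointly Gaussian ℝ^p-valued random vectors satisfying Assumptions (A2) and (A3) with γ1 ≤ C0·√(r(Σ0)) and γ3 ≤ C0 for some constant C0 > 0, where Σ0 := E Y_1 Y_1ᵀ, Σ_m := E Y_1 Y_{1+m}ᵀ and r(Σ0) := Tr(Σ0)/‖Σ0‖. Then there exist constants C, C′ > 0 depending only on ε and C0 such that for all integers m ≥ 1: ‖Σ_m‖ ≤ C·‖Σ0‖·exp(−γ4(m−1)) and ‖Σ_m‖_* ≤ C′·Tr(Σ0)·exp(−γ2(m−1)), where ‖·‖_* is the nuclear norm. -/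
/-! Take the coupling `Ỹ` of (A2)/(A3) at time `1`. Since `Y₁` is centred and independent of
`Ỹ_{1+m}`, `E[Y₁ⁱ Y_{1+m}ʲ] = E[Y₁ⁱ (Y_{1+m}ʲ - Ỹ_{1+m}ʲ)]`, and Hölder's inequality with exponents
`(1+ε)/ε` and `1+ε` bounds this by a moment of the Gaussian `Y₁ⁱ` times the coupling error, which
decays like `exp(-γ₄(m-1))` along coordinate vectors by (A3) and like `exp(-γ₂(m-1))` in Euclidean
norm by (A2). Spectral and nuclear norms are both at most the sum of the absolute entries, so the
constants absorb `p` and the moments of `Y₁`; `γ₁ > 0` forces `‖Σ₀‖, Tr Σ₀ > 0`. -/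

open MeasureTheory ProbabilityTheory Real Filter
open scoped BigOperators ENNReal NNReal Matrix

noncomputable section

namespace AutoCov

variable {Ω : Type*} [MeasurableSpace Ω]

section Norms

variable {n : ℕ}

lemma vnorm_eq_norm_toLp (v : Fin n → ℝ) : vnorm v = ‖WithLp.toLp 2 v‖ := by
  simp [vnorm, EuclideanSpace.norm_eq]

lemma abs_le_vnorm (v : Fin n → ℝ) (i : Fin n) : |v i| ≤ vnorm v := by
  simpa [vnorm_eq_norm_toLp] using PiLp.norm_apply_le (WithLp.toLp 2 v) i

lemma vnorm_le_sum_abs (v : Fin n → ℝ) : vnorm v ≤ ∑ i, |v i| :=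
  calc vnorm v = ‖∑ i, WithLp.toLp 2 (Pi.single i (v i) : Fin n → ℝ)‖ := by
        rw [← WithLp.toLp_sum, Finset.univ_sum_single, vnorm_eq_norm_toLp]
  _ ≤ ∑ i, ‖WithLp.toLp 2 (Pi.single i (v i) : Fin n → ℝ)‖ := norm_sum_le _ _
  _ = ∑ i, |v i| := by simp

lemma dotp_single_one (v : Fin n → ℝ) (j : Fin n) : dotp v (Pi.single j 1) = v j := by
  simp [dotp, Pi.single_apply]

lemma vnorm_single_one (j : Fin n) : vnorm (Pi.single j (1 : ℝ)) = 1 := by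
  simp [vnorm_eq_norm_toLp]

variable {m : ℕ}

lemma vnorm_mulVec_le_sum_abs (A : Matrix (Fin m) (Fin n) ℝ) {u : Fin n → ℝ} (hu : vnorm u ≤ 1) :
    vnorm (A *ᵥ u) ≤ ∑ i, ∑ j, |A i j| := by
  refine (vnorm_le_sum_abs _).trans (Finset.sum_le_sum fun i _ => ?_)
  calc |(A *ᵥ u) i| ≤ ∑ j, |A i j * u j| :=
        Finset.abs_sum_le_sum_abs (fun j => A i j * u j) Finset.univ
  _ ≤ ∑ j, |A i j| := Finset.sum_le_sum fun j _ => by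
      rw [abs_mul]
      exact mul_le_of_le_one_right (abs_nonneg _) ((abs_le_vnorm u j).trans hu)

lemma bddAbove_specNorm_set (A : Matrix (Fin m) (Fin n) ℝ) :
    BddAbove {x : ℝ | ∃ u : Fin n → ℝ, vnorm u ≤ 1 ∧ x = vnorm (A *ᵥ u)} := by
  refine ⟨∑ i, ∑ j, |A i j|, ?_⟩
  rintro x ⟨u, hu, rfl⟩
  exact vnorm_mulVec_le_sum_abs A hu

lemma specNorm_nonneg (A : Matrix (Fin m) (Fin n) ℝ) : 0 ≤ specNorm A :=
  (Real.sqrt_nonneg _).trans <| le_csSup (bddAbove_specNorm_set A) ⟨0, by simp [vnorm], rfl⟩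

lemma specNorm_le_sum_abs (A : Matrix (Fin m) (Fin n) ℝ) : specNorm A ≤ ∑ i, ∑ j, |A i j| :=
  Real.sSup_le (by rintro x ⟨u, hu, rfl⟩; exact vnorm_mulVec_le_sum_abs A hu) (by positivity)

lemma abs_apply_le_specNorm (A : Matrix (Fin m) (Fin n) ℝ) (i : Fin m) (j : Fin n) :
    |A i j| ≤ specNorm A :=
  calc |A i j| = |(A *ᵥ Pi.single j 1) i| := by simp [Matrix.mulVec_single]
  _ ≤ vnorm (A *ᵥ Pi.single j 1) := abs_le_vnorm _ i
  _ ≤ specNorm A :=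
      le_csSup (bddAbove_specNorm_set A) ⟨Pi.single j 1, (vnorm_single_one j).le, rfl⟩

lemma nucNorm_le_sum_abs (A : Matrix (Fin m) (Fin n) ℝ) : nucNorm A ≤ ∑ i, ∑ j, |A i j| := by
  refine Real.sSup_le ?_ (by positivity)
  rintro x ⟨B, hB, rfl⟩
  calc (Aᵀ * B).trace = ∑ i, ∑ j, A i j * B i j := by
        simp only [Matrix.trace, Matrix.diag, Matrix.mul_apply, Matrix.transpose_apply]
        exact Finset.sum_comm
  _ ≤ ∑ i, ∑ j, |A i j| := by
      gcongr with i _ j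
      calc A i j * B i j ≤ |A i j| * |B i j| := (le_abs_self _).trans (abs_mul _ _).le
      _ ≤ |A i j| := mul_le_of_le_one_right (abs_nonneg _) ((abs_apply_le_specNorm B i j).trans hB)

lemma sum_sum_abs_le_of_abs_le {A : Matrix (Fin m) (Fin n) ℝ} {a : Fin m → ℝ} {b : ℝ}
    (h : ∀ i j, |A i j| ≤ a i * b) : ∑ i, ∑ j, |A i j| ≤ n * (∑ i, a i) * b :=
  calc ∑ i, ∑ j, |A i j| ≤ ∑ i, ∑ _j : Fin n, a i * b := by gcongr with i _ j; exact h i j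
  _ = n * (∑ i, a i) * b := by
      simp only [Finset.sum_const, Finset.card_univ, Fintype.card_fin, nsmul_eq_mul, mul_assoc,
        Finset.sum_mul, Finset.mul_sum]

end Norms

section Lq

variable {μ : Measure Ω}

lemma Lq_nonneg (q : ℝ) (X : Ω → ℝ) : 0 ≤ Lq μ q X := by
  unfold Lq; positivity

lemma Lq_le_Lq_of_abs_le {q : ℝ} (hq : 0 < q) {f g : Ω → ℝ}
    (hg : Integrable (fun ω => |g ω| ^ q) μ) (hfg : ∀ ω, |f ω| ≤ |g ω|) : Lq μ q f ≤ Lq μ q g := by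
  refine Real.rpow_le_rpow (integral_nonneg fun _ => by positivity) ?_ (by positivity)
  exact integral_mono_of_nonneg (ae_of_all _ fun ω => by positivity) hg
    (ae_of_all _ fun ω => Real.rpow_le_rpow (abs_nonneg _) (hfg ω) hq.le)

lemma integrable_abs_rpow_of_memLp {q : ℝ} (hq : 0 < q) {f : Ω → ℝ}
    (hf : MemLp f (ENNReal.ofReal q) μ) : Integrable (fun ω => |f ω| ^ q) μ := by
  simpa [ENNReal.toReal_ofReal hq.le] using
    hf.integrable_norm_rpow (by simpa using hq) ENNReal.ofReal_ne_top

lemma abs_integral_mul_le_Lq_mul_Lq_sub {p q : ℝ} (hpq : p.HolderConjugate q) {X Z Z' : Ω → ℝ}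
    (hX : MemLp X (ENNReal.ofReal p) μ) (hZ : MemLp Z (ENNReal.ofReal q) μ)
    (hZ' : MemLp Z' (ENNReal.ofReal q) μ) (hXZ' : IndepFun X Z' μ) (hX0 : μ[X] = 0) :
    |∫ ω, X ω * Z ω ∂μ| ≤ Lq μ p X * Lq μ q (Z - Z') := by
  have := hpq.ennrealOfReal
  have hXZ'0 : ∫ ω, X ω * Z' ω ∂μ = 0 := by
    rw [hXZ'.integral_fun_mul_eq_mul_integral hX.1 hZ'.1, hX0, zero_mul]
  have hsplit : ∫ ω, X ω * Z ω ∂μ = ∫ ω, X ω * (Z - Z') ω ∂μ := by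
    simp only [Pi.sub_apply, mul_sub]
    have hintXZ : Integrable (fun ω => X ω * Z ω) μ := hX.integrable_mul hZ
    have hintXZ' : Integrable (fun ω => X ω * Z' ω) μ := hX.integrable_mul hZ'
    rw [integral_sub hintXZ hintXZ', hXZ'0, sub_zero]
  calc |∫ ω, X ω * Z ω ∂μ| ≤ ∫ ω, ‖X ω‖ * ‖(Z - Z') ω‖ ∂μ := by
        rw [hsplit]
        simpa only [norm_mul, Real.norm_eq_abs] using
          norm_integral_le_integral_norm (fun ω => X ω * (Z - Z') ω)
  _ ≤ Lq μ p X * Lq μ q (Z - Z') := by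
        simpa only [Lq, Real.norm_eq_abs] using integral_mul_norm_le_Lp_mul_Lq hpq hX (hZ.sub hZ')

end Lq

section Coupling

variable {μ : Measure Ω} {ι κ E F : Type*} [MeasurableSpace E] [MeasurableSpace F]

lemma indepFun_of_indep_seqSigma {f : ι → Ω → E} {g : κ → Ω → F}
    (h : Indep (seqSigma f) (seqSigma g) μ) (i : ι) (k : κ) : IndepFun (f i) (g k) μ := by
  have hf : Measurable[seqSigma f] (f i) := fun _ hs => ⟨_, measurable_pi_apply i hs, rfl⟩
  have hg : Measurable[seqSigma g] (g k) := fun _ hs => ⟨_, measurable_pi_apply k hs, rfl⟩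
  exact (IndepFun_iff_Indep _ _ _).2 <|
    indep_of_indep_of_le_left (indep_of_indep_of_le_right h hg.comap_le) hf.comap_le

lemma identDistrib_of_identDistribFam [NeZero μ] {f g : ι → Ω → E} (h : identDistribFam μ f g)
    (hg : AEMeasurable (fun ω i => g i ω) μ) (i : ι) : IdentDistrib (f i) (g i) μ μ :=
  have hf : AEMeasurable (fun ω i => f i ω) μ :=
    .of_map_ne_zero <| h ▸ (Measure.map_ne_zero_iff hg).2 (NeZero.ne μ)
  (IdentDistrib.mk hf hg h).comp (measurable_pi_apply i)

end Coupling

section Autocovariance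

variable {μ : Measure Ω} {p : ℕ} {Y Yt : ℤ → Ω → Fin p → ℝ}

lemma memLp_of_gaussianSeq (hY : gaussianSeq μ Y) (t : ℤ) (i : Fin p) {r : ℝ≥0∞} (hr : r ≠ ∞) :
    MemLp (fun ω => Y t ω i) r μ := by
  obtain ⟨v, hv⟩ := hY {(t, i)} fun _ => 1
  simp only [Finset.sum_singleton, one_mul] at hv
  have hmeas : AEMeasurable (fun ω => Y t ω i) μ := .of_map_ne_zero <|
    hv ▸ IsProbabilityMeasure.ne_zero _
  exact (memLp_map_measure_iff aestronglyMeasurable_id hmeas).1 (hv ▸ memLp_id_gaussianReal' r hr)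

variable [IsProbabilityMeasure μ]

lemma identDistrib_of_coupling (hY : gaussianSeq μ Y) {j : ℤ}
    (hid : identDistribFam μ (fun t : {t : ℤ // j < t} => Yt t.1)
      (fun t : {t : ℤ // j < t} => Y t.1))
    {k : ℤ} (hk : j < k) (i : Fin p) :
    IdentDistrib (fun ω => Yt k ω i) (fun ω => Y k ω i) μ μ :=
  (identDistrib_of_identDistribFam hid (aemeasurable_pi_lambda _ fun t =>
      aemeasurable_pi_lambda _ fun i =>
        (memLp_of_gaussianSeq hY t.1 i (r := 1) (by simp)).aemeasurable)
    ⟨k, hk⟩).comp (measurable_pi_apply i)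

lemma abs_integral_mul_le_of_coupling (hY : gaussianSeq μ Y)
    (hmean : meanZero μ Y) {j : ℤ}
    (hind : Indep (seqSigma fun t : {t : ℤ // t ≤ j} => Y t.1)
      (seqSigma fun t : {t : ℤ // j < t} => Yt t.1) μ)
    (hid : identDistribFam μ (fun t : {t : ℤ // j < t} => Yt t.1)
      (fun t : {t : ℤ // j < t} => Y t.1))
    {s k : ℤ} (hs : s ≤ j) (hk : j < k) (i l : Fin p) {q : ℝ} (hq : 1 < q) :
    |∫ ω, Y s ω i * Y k ω l ∂μ| ≤
      Lq μ q.conjExponent (fun ω => Y s ω i) * Lq μ q (fun ω => Y k ω l - Yt k ω l) :=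
  abs_integral_mul_le_Lq_mul_Lq_sub (Real.HolderConjugate.conjExponent hq).symm
    (memLp_of_gaussianSeq hY s i (by simp)) (memLp_of_gaussianSeq hY k l (by simp))
    ((identDistrib_of_coupling hY hid hk l).symm.memLp_snd (memLp_of_gaussianSeq hY k l (by simp)))
    ((indepFun_of_indep_seqSigma hind ⟨s, hs⟩ ⟨k, hk⟩).comp (measurable_pi_apply i)
      (measurable_pi_apply l))
    (hmean s i)

lemma abs_integral_mul_le_of_A3 (hY : gaussianSeq μ Y) (hmean : meanZero μ Y)
    {κ γ3 γ4 ε : ℝ} (hA3 : A3 μ Y κ γ3 γ4 ε) (hε : 0 < ε) (s : ℤ) {m : ℕ} (hm : 1 ≤ m)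
    (i l : Fin p) :
    |∫ ω, Y s ω i * Y (s + m) ω l ∂μ| ≤
      Lq μ (1 + ε).conjExponent (fun ω => Y s ω i) * (γ3 * κ * Real.exp (-γ4 * (m - 1))) := by
  obtain ⟨Yt, hind, hid, hdecay⟩ := hA3 s
  have hlag : ((s + m : ℤ) : ℝ) - s - 1 = m - 1 := by push_cast; ring
  have h := hdecay (s + m) (by omega) (Pi.single l 1) (vnorm_single_one l)
  simp only [dotp_single_one, hlag] at h
  exact (abs_integral_mul_le_of_coupling hY hmean hind hid le_rfl (by omega) i l
    (by linarith)).trans (mul_le_mul_of_nonneg_left h (Lq_nonneg _ _))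

lemma abs_integral_mul_le_of_A2 (hY : gaussianSeq μ Y) (hmean : meanZero μ Y)
    {κ γ1 γ2 ε : ℝ} (hA2 : A2 μ Y κ γ1 γ2 ε) (hε : 0 < ε) (s : ℤ) {m : ℕ} (hm : 1 ≤ m)
    (i l : Fin p) :
    |∫ ω, Y s ω i * Y (s + m) ω l ∂μ| ≤
      Lq μ (1 + ε).conjExponent (fun ω => Y s ω i) * (γ1 * κ * Real.exp (-γ2 * (m - 1))) := by
  obtain ⟨Yt, hind, hid, hdecay⟩ := hA2 s
  have hlag : ((s + m : ℤ) : ℝ) - s - 1 = m - 1 := by push_cast; ring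
  have h := hdecay (s + m) (by omega)
  rw [hlag] at h
  have hdiff : ∀ l', MemLp (fun ω => Y (s + m) ω l' - Yt (s + m) ω l') (ENNReal.ofReal (1 + ε)) μ :=
    fun l' => (memLp_of_gaussianSeq hY _ l' (by simp)).sub
      ((identDistrib_of_coupling hY hid (by omega) l').symm.memLp_snd
        (memLp_of_gaussianSeq hY _ l' (by simp)))
  have hnorm : MemLp (fun ω => vnorm fun l' => Y (s + m) ω l' - Yt (s + m) ω l')
      (ENNReal.ofReal (1 + ε)) μ := by
    simpa only [vnorm_eq_norm_toLp] using
      (MemLp.of_eval_piLp (q := 2) (f := fun ω => WithLp.toLp 2 fun l' => _) hdiff).norm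
  refine (abs_integral_mul_le_of_coupling hY hmean hind hid le_rfl (by omega) i l
    (by linarith)).trans (mul_le_mul_of_nonneg_left (le_trans ?_ h) (Lq_nonneg _ _))
  refine Lq_le_Lq_of_abs_le (by linarith) (integrable_abs_rpow_of_memLp (by linarith) hnorm)
    fun ω => (abs_le_vnorm (fun l' => Y (s + m) ω l' - Yt (s + m) ω l') l).trans (le_abs_self _)

end Autocovariance

lemma exists_pos_le_mul (K : ℝ) {N : ℝ} (hN : 0 < N) : ∃ C, 0 < C ∧ K ≤ C * N :=
  ⟨max (K / N) 1, by positivity,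
    (div_mul_cancel₀ K hN.ne').symm.le.trans (by gcongr; exact le_max_left _ _)⟩

theorem gaussian_autocovariance_geometric_decay_general
    (μ : Measure Ω) [IsProbabilityMeasure μ]
    {p : ℕ} (Y : ℤ → Ω → Fin p → ℝ)
    (γ1 γ2 γ3 γ4 ε C0 : ℝ)
    (hε : 0 < ε) (hγ1 : 0 < γ1)
    (hgauss : gaussianSeq μ Y) (hmean : meanZero μ Y)
    (Sig : ℕ → Matrix (Fin p) (Fin p) ℝ)
    (hSig : ∀ m : ℕ, Sig m = matExp μ fun ω => Matrix.vecMulVec (Y 1 ω) (Y (1 + (m : ℤ)) ω))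
    (hA2 : A2 μ Y (Real.sqrt (specNorm (Sig 0))) γ1 γ2 ε)
    (hA3 : A3 μ Y (Real.sqrt (specNorm (Sig 0))) γ3 γ4 ε)
    (hγ1C : γ1 ≤ C0 * Real.sqrt ((Sig 0).trace / specNorm (Sig 0))) :
    ∃ C C' : ℝ, 0 < C ∧ 0 < C' ∧ ∀ m : ℕ, 1 ≤ m →
      specNorm (Sig m) ≤ C * specNorm (Sig 0) * Real.exp (-γ4 * ((m : ℝ) - 1)) ∧
      nucNorm (Sig m) ≤ C' * (Sig 0).trace * Real.exp (-γ2 * ((m : ℝ) - 1)) := by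
  have hSig_apply (m : ℕ) (i j : Fin p) : Sig m i j = ∫ ω, Y 1 ω i * Y (1 + m) ω j ∂μ := by
    simp [hSig, matExp, Matrix.vecMulVec_apply]
  have hratio : 0 < (Sig 0).trace / specNorm (Sig 0) := by
    refine Real.sqrt_pos.1 ((Real.sqrt_nonneg _).lt_of_ne' fun h => ?_)
    rw [h, mul_zero] at hγ1C
    linarith
  have hN : 0 < specNorm (Sig 0) :=
    (specNorm_nonneg _).lt_of_ne' fun h => by simp [h] at hratio
  have hT : 0 < (Sig 0).trace := (div_pos_iff_of_pos_right hN).1 hratio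
  set κ := Real.sqrt (specNorm (Sig 0))
  set K := (p : ℝ) * ∑ i, Lq μ (1 + ε).conjExponent (fun ω => Y 1 ω i)
  obtain ⟨C, hC, hKC⟩ := exists_pos_le_mul (K * (γ3 * κ)) hN
  obtain ⟨C', hC', hKC'⟩ := exists_pos_le_mul (K * (γ1 * κ)) hT
  refine ⟨C, C', hC, hC', fun m hm => ⟨?_, ?_⟩⟩
  · calc specNorm (Sig m) ≤ K * (γ3 * κ * Real.exp (-γ4 * (m - 1))) :=
          (specNorm_le_sum_abs _).trans <| sum_sum_abs_le_of_abs_le fun i j =>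
            hSig_apply m i j ▸ abs_integral_mul_le_of_A3 hgauss hmean hA3 hε 1 hm i j
    _ = K * (γ3 * κ) * Real.exp (-γ4 * (m - 1)) := by ring
    _ ≤ C * specNorm (Sig 0) * Real.exp (-γ4 * (m - 1)) := by gcongr
  · calc nucNorm (Sig m) ≤ K * (γ1 * κ * Real.exp (-γ2 * (m - 1))) :=
          (nucNorm_le_sum_abs _).trans <| sum_sum_abs_le_of_abs_le fun i j =>
            hSig_apply m i j ▸ abs_integral_mul_le_of_A2 hgauss hmean hA2 hε 1 hm i j
    _ = K * (γ1 * κ) * Real.exp (-γ2 * (m - 1)) := by ring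
    _ ≤ C' * (Sig 0).trace * Real.exp (-γ2 * (m - 1)) := by gcongr

/-- geometric decay of autocovariances, Theorem 2.2 proof, of Han–Li:
for a stationary mean-zero Gaussian sequence satisfying (A2)–(A3) (with `κ1` replaced by
`√‖Σ₀‖`), spectral and nuclear norms of the autocovariances decay geometrically. -/
theorem gaussian_autocovariance_geometric_decay
    (μ : Measure Ω) [IsProbabilityMeasure μ]
    {p : ℕ} (hp : 0 < p) (Y : ℤ → Ω → Fin p → ℝ)
    (γ1 γ2 γ3 γ4 ε C0 : ℝ)
    (hε : 0 < ε) (hγ1 : 0 < γ1) (hγ2 : 0 < γ2) (hγ3 : 0 < γ3) (hγ4 : 0 < γ4)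
    (hstat : stationary μ Y) (hgauss : gaussianSeq μ Y) (hmean : meanZero μ Y)
    (Sig : ℕ → Matrix (Fin p) (Fin p) ℝ)
    (hSig : ∀ m : ℕ, Sig m = matExp μ fun ω => Matrix.vecMulVec (Y 1 ω) (Y (1 + (m : ℤ)) ω))
    (hA2 : A2 μ Y (Real.sqrt (specNorm (Sig 0))) γ1 γ2 ε)
    (hA3 : A3 μ Y (Real.sqrt (specNorm (Sig 0))) γ3 γ4 ε)
    (hC0 : 0 < C0)
    (hγ1C : γ1 ≤ C0 * Real.sqrt ((Sig 0).trace / specNorm (Sig 0)))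
    (hγ3C : γ3 ≤ C0) :
    ∃ C C' : ℝ, 0 < C ∧ 0 < C' ∧ ∀ m : ℕ, 1 ≤ m →
      specNorm (Sig m) ≤ C * specNorm (Sig 0) * Real.exp (-γ4 * ((m : ℝ) - 1)) ∧
      nucNorm (Sig m) ≤ C' * (Sig 0).trace * Real.exp (-γ2 * ((m : ℝ) - 1)) :=
  gaussian_autocovariance_geometric_decay_general μ Y γ1 γ2 γ3 γ4 ε C0 hε hγ1 hgauss hmean Sig hSig
    hA2 hA3 hγ1C

end AutoCov

end
end
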